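/- Fix μ̂ ∈ ℝ and σ̂ > 0, and define the expected-gap function G : ℝ → ℝ by G(a) = μ̂ + σ̂·λ((a − μ̂)/σ̂) − a, where λ is the inverse Mills ratio. Then G is differentiable on ℝ with derivative G'(a) = λ'((a − μ̂)/σ̂) − 1, and −1 < G'(a) < 0 for every a ∈ ℝ; in particular G is strictly decreasing on ℝ. -/

import Mathlib

open Real MeasureTheory

/-- Standard normal density `φ(z) = exp(−z²/2)/√(2π)`. -/
noncomputable def stdNormalPdf (z : ℝ) : ℝ :=
  Real.exp (-z ^ 2 / 2) / Real.sqrt (2 * Real.pi)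

/-- Standard normal cumulative distribution function `Φ`. -/
noncomputable def stdNormalCdf (z : ℝ) : ℝ :=
  ∫ t in Set.Iic z, stdNormalPdf t

/-- Inverse Mills ratio `λ(z) = φ(z)/(1 − Φ(z))`. -/
noncomputable def mills (z : ℝ) : ℝ :=
  stdNormalPdf z / (1 - stdNormalCdf z)


/-! With `Q = 1 − Φ` one has `φ' = −zφ` and `Q' = −φ`, so `λ = φ/Q` satisfies `λ' = λ(λ − z)`,
and `0 < λ' < 1` amounts to `zQ < φ` and `φ(φ − zQ) < Q²`. Both come from a chain of functions
that vanish at `+∞` and are strictly decreasing, each because of the previous one: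
`φ − zQ` has derivative `−Q`, `(1 + z²)Q − zφ` has derivative `−2(φ − zQ)`, and
`Q² − φ(φ − zQ)` has derivative `−φ((1 + z²)Q − zφ)`. The limits at `+∞` follow from the
Gaussian decay of `φ` and the bound `zQ(z) ≤ ∫_z^∞ tφ(t) dt = φ(z)` for `z > 0`. -/

open Filter Set Topology

lemma stdNormalPdf_pos (z : ℝ) : 0 < stdNormalPdf z :=
  div_pos (exp_pos _) (sqrt_pos.2 (by positivity))

lemma continuous_stdNormalPdf : Continuous stdNormalPdf := by
  unfold stdNormalPdf
  fun_prop

lemma stdNormalPdf_eq_exp_mul (z : ℝ) :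
    stdNormalPdf z = exp (-(1 / 2) * z ^ 2) * (√(2 * π))⁻¹ := by
  rw [stdNormalPdf, div_eq_mul_inv]
  ring_nf

lemma integrable_stdNormalPdf : Integrable stdNormalPdf := by
  simpa only [← stdNormalPdf_eq_exp_mul] using
    (integrable_exp_neg_mul_sq (by norm_num : (0 : ℝ) < 1 / 2)).mul_const (√(2 * π))⁻¹

lemma integral_stdNormalPdf : ∫ z, stdNormalPdf z = 1 := by
  simp_rw [stdNormalPdf_eq_exp_mul]
  rw [integral_mul_const, integral_gaussian, show π / (1 / 2) = 2 * π by ring]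
  exact mul_inv_cancel₀ (sqrt_pos.2 (by positivity)).ne'

lemma hasDerivAt_stdNormalPdf (z : ℝ) : HasDerivAt stdNormalPdf (-z * stdNormalPdf z) z := by
  have hexponent : HasDerivAt (fun z : ℝ => -z ^ 2 / 2) (-z) z := by
    simpa using (((hasDerivAt_pow 2 z).neg).div_const 2).congr_deriv (by ring)
  exact (hexponent.exp.div_const _).congr_deriv (by rw [stdNormalPdf]; ring)

lemma tendsto_pow_mul_stdNormalPdf_atTop (n : ℕ) :
    Tendsto (fun z => z ^ n * stdNormalPdf z) atTop (𝓝 0) := by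
  have h := ((tendsto_rpow_abs_mul_exp_neg_mul_sq_cocompact (by norm_num : (0 : ℝ) < 1 / 2)
    n).mono_left atTop_le_cocompact).mul_const (√(2 * π))⁻¹
  rw [zero_mul] at h
  refine h.congr' ?_
  filter_upwards [eventually_ge_atTop 0] with z hz
  rw [abs_of_nonneg hz, rpow_natCast, stdNormalPdf_eq_exp_mul, mul_assoc]

lemma tendsto_stdNormalPdf_atTop : Tendsto stdNormalPdf atTop (𝓝 0) := by
  simpa using tendsto_pow_mul_stdNormalPdf_atTop 0

lemma hasDerivAt_stdNormalCdf (z : ℝ) : HasDerivAt stdNormalCdf (stdNormalPdf z) z := by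
  have hcdf : stdNormalCdf = fun x => stdNormalCdf 0 + ∫ t in (0 : ℝ)..x, stdNormalPdf t := by
    funext x
    rw [← intervalIntegral.integral_Iic_sub_Iic integrable_stdNormalPdf.integrableOn
      integrable_stdNormalPdf.integrableOn, stdNormalCdf, stdNormalCdf]
    ring
  rw [hcdf]
  exact (intervalIntegral.integral_hasDerivAt_right integrable_stdNormalPdf.intervalIntegrable
    (continuous_stdNormalPdf.stronglyMeasurableAtFilter _ _)
    continuous_stdNormalPdf.continuousAt).const_add _

noncomputable def stdNormalTail (z : ℝ) : ℝ := 1 - stdNormalCdf z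

lemma stdNormalTail_eq_integral (z : ℝ) : stdNormalTail z = ∫ t in Ioi z, stdNormalPdf t := by
  have h := integral_add_compl (measurableSet_Iic (a := z)) integrable_stdNormalPdf
  rw [compl_Iic, integral_stdNormalPdf] at h
  rw [stdNormalTail, stdNormalCdf]
  linarith

lemma stdNormalTail_pos (z : ℝ) : 0 < stdNormalTail z := by
  rw [stdNormalTail_eq_integral, setIntegral_pos_iff_support_of_nonneg_ae
    (Eventually.of_forall fun t => (stdNormalPdf_pos t).le) integrable_stdNormalPdf.integrableOn,
    Function.support_eq_univ fun t => (stdNormalPdf_pos t).ne', univ_inter, volume_Ioi]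
  exact ENNReal.zero_lt_top

lemma hasDerivAt_stdNormalTail (z : ℝ) : HasDerivAt stdNormalTail (-stdNormalPdf z) z :=
  (hasDerivAt_stdNormalCdf z).const_sub 1

lemma mul_stdNormalTail_le {z : ℝ} (hz : 0 < z) : z * stdNormalTail z ≤ stdNormalPdf z := by
  have hderiv : ∀ t ∈ Ici z, HasDerivAt (fun t => -stdNormalPdf t) (t * stdNormalPdf t) t :=
    fun t _ => (hasDerivAt_stdNormalPdf t).neg.congr_deriv (by ring)
  have hnonneg : ∀ t ∈ Ioi z, 0 ≤ t * stdNormalPdf t :=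
    fun t ht => mul_nonneg (hz.le.trans ht.out.le) (stdNormalPdf_pos t).le
  have hlim : Tendsto (fun t => -stdNormalPdf t) atTop (𝓝 (-0)) := tendsto_stdNormalPdf_atTop.neg
  calc z * stdNormalTail z = ∫ t in Ioi z, z * stdNormalPdf t := by
        rw [stdNormalTail_eq_integral, integral_const_mul]
    _ ≤ ∫ t in Ioi z, t * stdNormalPdf t :=
        setIntegral_mono_on (integrable_stdNormalPdf.const_mul z).integrableOn
          (integrableOn_Ioi_deriv_of_nonneg' hderiv hnonneg hlim) measurableSet_Ioi
          fun t ht => mul_le_mul_of_nonneg_right ht.out.le (stdNormalPdf_pos t).le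
    _ = stdNormalPdf z := by
        rw [integral_Ioi_of_hasDerivAt_of_nonneg' hderiv hnonneg hlim]
        ring

lemma tendsto_pow_mul_stdNormalTail_atTop (n : ℕ) :
    Tendsto (fun z => z ^ n * stdNormalTail z) atTop (𝓝 0) := by
  refine squeeze_zero' ?_ ?_ (tendsto_pow_mul_stdNormalPdf_atTop n)
  · filter_upwards [eventually_ge_atTop 0] with z hz
    exact mul_nonneg (pow_nonneg hz n) (stdNormalTail_pos z).le
  · filter_upwards [eventually_ge_atTop 1] with z hz
    have hQ : stdNormalTail z ≤ stdNormalPdf z :=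
      (le_mul_of_one_le_left (stdNormalTail_pos z).le hz).trans
        (mul_stdNormalTail_le (one_pos.trans_le hz))
    exact mul_le_mul_of_nonneg_left hQ (pow_nonneg (zero_le_one.trans hz) n)

lemma pos_of_hasDerivAt_neg_of_tendsto_zero {f f' : ℝ → ℝ} (hf : ∀ x, HasDerivAt f (f' x) x)
    (hf' : ∀ x, f' x < 0) (hlim : Tendsto f atTop (𝓝 0)) (x : ℝ) : 0 < f x := by
  have hanti := strictAnti_of_hasDerivAt_neg hf hf'
  calc 0 ≤ f (x + 1) := hanti.antitone.le_of_tendsto hlim _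
    _ < f x := hanti (lt_add_one x)

lemma mul_stdNormalTail_lt (z : ℝ) : z * stdNormalTail z < stdNormalPdf z := by
  have hderiv (x : ℝ) : HasDerivAt (fun x => stdNormalPdf x - x * stdNormalTail x)
      (-stdNormalTail x) x :=
    ((hasDerivAt_stdNormalPdf x).sub
      ((hasDerivAt_id x).mul (hasDerivAt_stdNormalTail x))).congr_deriv (by simp)
  have hlim := (tendsto_pow_mul_stdNormalPdf_atTop 0).sub (tendsto_pow_mul_stdNormalTail_atTop 1)
  simp only [pow_zero, pow_one, one_mul, sub_zero] at hlim
  exact sub_pos.1 <| pos_of_hasDerivAt_neg_of_tendsto_zero hderiv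
    (fun x => neg_neg_of_pos (stdNormalTail_pos x)) hlim z

lemma mul_stdNormalPdf_lt (z : ℝ) : z * stdNormalPdf z < (1 + z ^ 2) * stdNormalTail z := by
  have hderiv (x : ℝ) : HasDerivAt (fun x => (1 + x ^ 2) * stdNormalTail x - x * stdNormalPdf x)
      (-2 * (stdNormalPdf x - x * stdNormalTail x)) x :=
    ((((hasDerivAt_pow 2 x).const_add 1).mul (hasDerivAt_stdNormalTail x)).sub
      ((hasDerivAt_id x).mul (hasDerivAt_stdNormalPdf x))).congr_deriv
        (by simp only [id_eq, Nat.cast_ofNat]; ring)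
  have hlim := ((tendsto_pow_mul_stdNormalTail_atTop 0).add
    (tendsto_pow_mul_stdNormalTail_atTop 2)).sub (tendsto_pow_mul_stdNormalPdf_atTop 1)
  simp only [pow_zero, pow_one, one_mul, add_zero, sub_zero] at hlim
  exact sub_pos.1 <| pos_of_hasDerivAt_neg_of_tendsto_zero hderiv
    (fun x => by linarith [mul_stdNormalTail_lt x]) (hlim.congr fun x => by ring) z

lemma stdNormalPdf_mul_sub_lt (z : ℝ) :
    stdNormalPdf z * (stdNormalPdf z - z * stdNormalTail z) < stdNormalTail z ^ 2 := by
  have hderiv (x : ℝ) : HasDerivAt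
      (fun x => stdNormalTail x ^ 2 - stdNormalPdf x * (stdNormalPdf x - x * stdNormalTail x))
      (-(stdNormalPdf x * ((1 + x ^ 2) * stdNormalTail x - x * stdNormalPdf x))) x := by
    have hP := hasDerivAt_stdNormalPdf x
    have hQ := hasDerivAt_stdNormalTail x
    exact ((hQ.pow 2).sub (hP.mul (hP.sub ((hasDerivAt_id x).mul hQ)))).congr_deriv
      (by simp only [id_eq, Pi.sub_apply, Pi.mul_apply]; ring)
  have hlim : Tendsto (fun x => stdNormalTail x ^ 2 -
      stdNormalPdf x * (stdNormalPdf x - x * stdNormalTail x)) atTop (𝓝 0) := by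
    simpa using ((tendsto_pow_mul_stdNormalTail_atTop 0).pow 2).sub
      ((tendsto_pow_mul_stdNormalPdf_atTop 0).mul
        ((tendsto_pow_mul_stdNormalPdf_atTop 0).sub (tendsto_pow_mul_stdNormalTail_atTop 1)))
  exact sub_pos.1 <| pos_of_hasDerivAt_neg_of_tendsto_zero hderiv
    (fun x => neg_neg_of_pos (mul_pos (stdNormalPdf_pos x) (sub_pos.2 (mul_stdNormalPdf_lt x))))
    hlim z

lemma mills_eq_div (z : ℝ) : mills z = stdNormalPdf z / stdNormalTail z := rfl

lemma mills_pos (z : ℝ) : 0 < mills z :=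
  div_pos (stdNormalPdf_pos z) (stdNormalTail_pos z)

lemma lt_mills (z : ℝ) : z < mills z := by
  rw [mills_eq_div, lt_div_iff₀ (stdNormalTail_pos z)]
  exact mul_stdNormalTail_lt z

lemma hasDerivAt_mills (z : ℝ) : HasDerivAt mills (mills z * (mills z - z)) z := by
  have hQ := (stdNormalTail_pos z).ne'
  have hdiv := (hasDerivAt_stdNormalPdf z).div (hasDerivAt_stdNormalTail z) hQ
  rw [funext mills_eq_div]
  exact hdiv.congr_deriv (by field_simp; ring)

lemma deriv_mills_pos (z : ℝ) : 0 < deriv mills z := by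
  rw [(hasDerivAt_mills z).deriv]
  exact mul_pos (mills_pos z) (sub_pos.2 (lt_mills z))

lemma deriv_mills_lt_one (z : ℝ) : deriv mills z < 1 := by
  have hQ := stdNormalTail_pos z
  rw [(hasDerivAt_mills z).deriv, mills_eq_div, div_sub' hQ.ne', div_mul_div_comm, ← sq,
    div_lt_one (by positivity)]
  linarith [stdNormalPdf_mul_sub_lt z]

/-- **Strict monotonicity of the expected gap.** For `σ̂ > 0`, the expected-gap
function `G(a) = μ̂ + σ̂·λ((a − μ̂)/σ̂) − a` is differentiable with
`G'(a) = λ'((a − μ̂)/σ̂) − 1 ∈ (−1, 0)` for every `a`; in particular `G` is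
strictly decreasing on `ℝ`. -/
theorem expectedGap_strictAnti (μhat σhat : ℝ) (hσ : 0 < σhat) :
    Differentiable ℝ (fun a : ℝ => μhat + σhat * mills ((a - μhat) / σhat) - a) ∧
    (∀ a : ℝ,
      deriv (fun a : ℝ => μhat + σhat * mills ((a - μhat) / σhat) - a) a
        = deriv mills ((a - μhat) / σhat) - 1 ∧
      -1 < deriv (fun a : ℝ => μhat + σhat * mills ((a - μhat) / σhat) - a) a ∧
      deriv (fun a : ℝ => μhat + σhat * mills ((a - μhat) / σhat) - a) a < 0) ∧
    StrictAnti (fun a : ℝ => μhat + σhat * mills ((a - μhat) / σhat) - a) := by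
  have hG (a : ℝ) : HasDerivAt (fun a : ℝ => μhat + σhat * mills ((a - μhat) / σhat) - a)
      (deriv mills ((a - μhat) / σhat) - 1) a := by
    have hz : HasDerivAt (fun a : ℝ => (a - μhat) / σhat) σhat⁻¹ a := by
      simpa using ((hasDerivAt_id a).sub_const μhat).div_const σhat
    have hmills := (hasDerivAt_mills ((a - μhat) / σhat)).differentiableAt.hasDerivAt.comp a hz
    exact (((hmills.const_mul σhat).const_add μhat).sub (hasDerivAt_id a)).congr_deriv
      (by field_simp)
  refine ⟨fun a => (hG a).differentiableAt, fun a => ?_,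
    strictAnti_of_hasDerivAt_neg hG fun a => ?_⟩
  · rw [(hG a).deriv]
    exact ⟨rfl, by linarith [deriv_mills_pos ((a - μhat) / σhat)],
      by linarith [deriv_mills_lt_one ((a - μhat) / σhat)]⟩
  · linarith [deriv_mills_lt_one ((a - μhat) / σhat)]
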